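/- For every partition π = (π_1,...,π_ℓ) of m ≥ 2 and every integer c ≥ 0 with c ≥ ℓ - 1 and c ≡ ℓ - 1 (mod 2), there exists a connected loop-less quiver Q with m vertices and n = m + c - 1 arrows whose vertex permutation ξ⁻_Q has cycle type π. -/

import Mathlib

open Matrix Polynomial

/-- Incidence matrix of a quiver with vertex set `Fin m`, arrow set `Fin n`,
source map `s` and target map `t`: the column of arrow `i` is `e_{s i} - e_{t i}`. -/
def incMatrix {m n : ℕ} (s t : Fin n → Fin m) : Matrix (Fin m) (Fin n) ℤ :=
  Matrix.of fun v i => (if v = s i then (1 : ℤ) else 0) - (if v = t i then (1 : ℤ) else 0)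

/-- Connectedness of the underlying multigraph of the quiver `(s, t)`. -/
def QuiverConnected {m n : ℕ} (s t : Fin n → Fin m) : Prop :=
  ∀ v w : Fin m,
    Relation.ReflTransGen (fun a b => ∃ i : Fin n, (s i = a ∧ t i = b) ∨ (s i = b ∧ t i = a)) v w

/-- The endpoint of arrow `i` other than `v` (for a loop-less quiver). -/
def otherEnd {m n : ℕ} (s t : Fin n → Fin m) (i : Fin n) (v : Fin m) : Fin m :=
  if s i = v then t i else s i

/-- Iterate the minimally decreasing walk starting at `v`, using only arrows with
index `< b`, always crossing the maximal available arrow. Returns the final vertex. -/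
def xiAux {m n : ℕ} (s t : Fin n → Fin m) (b : ℕ) (v : Fin m) : Fin m :=
  if h : (Finset.univ.filter (fun i : Fin n => (s i = v ∨ t i = v) ∧ i.val < b)).Nonempty then
    xiAux s t
      ((Finset.univ.filter (fun i : Fin n => (s i = v ∨ t i = v) ∧ i.val < b)).max' h).val
      (otherEnd s t
        ((Finset.univ.filter (fun i : Fin n => (s i = v ∨ t i = v) ∧ i.val < b)).max' h) v)
  else v
termination_by b
decreasing_by
  exact (Finset.mem_filter.mp (Finset.max'_mem _ h)).2.2

/-- The permutation of vertices `ξ⁻` determined by structural minimally decreasing walks: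
`xiDown s t v` is the end vertex of the structural decreasing walk starting at `v`. -/
def xiDown {m n : ℕ} (s t : Fin n → Fin m) (v : Fin m) : Fin m :=
  xiAux s t n v

/-- Iterate the minimally increasing walk starting at `v`, using only arrows with
index `≥ b`, always crossing the minimal available arrow. Returns the final vertex. -/
def xiAuxUp {m n : ℕ} (s t : Fin n → Fin m) (b : ℕ) (v : Fin m) : Fin m :=
  if h : (Finset.univ.filter (fun i : Fin n => (s i = v ∨ t i = v) ∧ b ≤ i.val)).Nonempty then
    xiAuxUp s t
      (((Finset.univ.filter (fun i : Fin n => (s i = v ∨ t i = v) ∧ b ≤ i.val)).min' h).val + 1)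
      (otherEnd s t
        ((Finset.univ.filter (fun i : Fin n => (s i = v ∨ t i = v) ∧ b ≤ i.val)).min' h) v)
  else v
termination_by n - b
decreasing_by
  have h1 := (Finset.mem_filter.mp (Finset.min'_mem _ h)).2.2
  have h2 := ((Finset.univ.filter (fun i : Fin n => (s i = v ∨ t i = v) ∧ b ≤ i.val)).min' h).isLt
  omega

/-- The map `ξ⁺`: end vertex of the structural minimally increasing walk starting at `v`. -/
def xiUp {m n : ℕ} (s t : Fin n → Fin m) (v : Fin m) : Fin m :=
  xiAuxUp s t 0 v

/-- Source vertex of a walk-step `(i, ε)`: `s i` if traversed positively, else `t i`. -/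
def stepSrc {m n : ℕ} (s t : Fin n → Fin m) (p : Fin n × Bool) : Fin m :=
  if p.2 then s p.1 else t p.1

/-- Target vertex of a walk-step `(i, ε)`. -/
def stepTgt {m n : ℕ} (s t : Fin n → Fin m) (p : Fin n × Bool) : Fin m :=
  if p.2 then t p.1 else s p.1

/-!
Allowing one more arrow `b` in `xiAux` makes the walk cross `b` first exactly when `b` is
incident to the current vertex, so `ξ⁻` is the product `τ₀ τ₁ ⋯ τₙ₋₁` of the
transpositions of the arrows, the last arrow acting first. Cut the vertices `0, …, m - 1` into
consecutive blocks of sizes `π₁, …, π_ℓ`: the path through a block contributes a cycle of that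
length, and the blocks are disjoint. Two parallel arrows placed consecutively contribute `τ² = 1`,
so a pair of parallel arrows between any two consecutive blocks connects the quiver without
changing `ξ⁻`, and `(c - (ℓ - 1)) / 2` further pairs bring the number of arrows from
`(m - ℓ) + 2 (ℓ - 1)` to `m + c - 1`.
-/

open Equiv Fin.NatCast

theorem List.cycleType_formPerm_of_nodup {α : Type*} [Fintype α] [DecidableEq α] {l : List α}
    (hl : l.Nodup) : l.formPerm.cycleType = if 2 ≤ l.length then {l.length} else 0 := by
  split_ifs with h
  · rw [(List.isCycle_formPerm hl h).cycleType, List.support_formPerm_of_nodup l hl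
      fun x hx => by simp [hx] at h, List.toFinset_card_of_nodup hl]
  · match l, h with
    | [], _ => simp
    | [x], _ => simp
    | _ :: _ :: _, h => simp at h

theorem Multiset.filter_not_two_le_eq_replicate {s : Multiset ℕ} (hs : ∀ a ∈ s, 0 < a) :
    s.filter (¬2 ≤ ·) = Multiset.replicate (s.sum - (s.filter (2 ≤ ·)).sum) 1 := by
  have hones : s.filter (¬2 ≤ ·) = Multiset.replicate (s.filter (¬2 ≤ ·)).card 1 :=
    Multiset.eq_replicate_card.mpr fun a ha => by
      have := hs a (Multiset.mem_of_mem_filter ha)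
      have := (Multiset.mem_filter.mp ha).2
      omega
  have hsum : s.sum = (s.filter (2 ≤ ·)).sum + (s.filter (¬2 ≤ ·)).sum := by
    rw [← Multiset.sum_add, Multiset.filter_add_not]
  rw [hones, Multiset.sum_replicate, smul_eq_mul, mul_one] at hsum
  rw [hones, hsum, Nat.add_sub_cancel_left]

theorem Multiset.eq_of_sum_eq_of_filter_two_le_eq {s t : Multiset ℕ} (hs : ∀ a ∈ s, 0 < a)
    (ht : ∀ a ∈ t, 0 < a) (hsum : s.sum = t.sum) (h : s.filter (2 ≤ ·) = t.filter (2 ≤ ·)) :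
    s = t := by
  rw [← Multiset.filter_add_not (2 ≤ ·) s, ← Multiset.filter_add_not (2 ≤ ·) t,
    Multiset.filter_not_two_le_eq_replicate hs, Multiset.filter_not_two_le_eq_replicate ht, h,
    hsum]

theorem Equiv.Perm.partition_parts_eq_of_cycleType_eq {α : Type*} [Fintype α] [DecidableEq α]
    {σ : Perm α} {n : ℕ} {π : n.Partition} (hn : Fintype.card α = n)
    (h : σ.cycleType = π.parts.filter (2 ≤ ·)) : σ.partition.parts = π.parts :=
  Multiset.eq_of_sum_eq_of_filter_two_le_eq (fun _ => σ.partition.parts_pos)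
    (fun _ => π.parts_pos) (by rw [σ.partition.parts_sum, π.parts_sum, hn])
    (by rw [Perm.filter_parts_partition_eq_cycleType, h])

section MinimallyDecreasingWalk

variable {m n : ℕ} (s t : Fin n → Fin m)

theorem otherEnd_eq_swap {i : Fin n} {v : Fin m} (hv : s i = v ∨ t i = v) :
    otherEnd s t i v = swap (s i) (t i) v := by
  rcases hv with rfl | rfl
  · simp [otherEnd]
  · by_cases h : s i = t i <;> simp [otherEnd, h]

theorem xiAux_zero (v : Fin m) : xiAux s t 0 v = v := by
  rw [xiAux, dif_neg]
  simp

theorem xiAux_succ {b : ℕ} (hb : b < n) (v : Fin m) :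
    xiAux s t (b + 1) v = xiAux s t b (swap (s ⟨b, hb⟩) (t ⟨b, hb⟩) v) := by
  set i₀ : Fin n := ⟨b, hb⟩
  by_cases hv : s i₀ = v ∨ t i₀ = v
  · have hmem : i₀ ∈ Finset.univ.filter fun i : Fin n => (s i = v ∨ t i = v) ∧ i.val < b + 1 := by
      simp [hv, i₀]
    have hmax : (Finset.univ.filter fun i : Fin n => (s i = v ∨ t i = v) ∧ i.val < b + 1).max'
        ⟨i₀, hmem⟩ = i₀ := by
      refine le_antisymm (Finset.max'_le _ _ _ fun i hi => ?_) (Finset.le_max' _ _ hmem)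
      exact Fin.le_def.mpr (Nat.lt_succ_iff.mp (Finset.mem_filter.mp hi).2.2)
    rw [xiAux, dif_pos ⟨i₀, hmem⟩, hmax, otherEnd_eq_swap s t hv]
  · have hfix : swap (s i₀) (t i₀) v = v :=
      swap_apply_of_ne_of_ne (fun h => hv (.inl h.symm)) (fun h => hv (.inr h.symm))
    have hset : (Finset.univ.filter fun i : Fin n => (s i = v ∨ t i = v) ∧ i.val < b + 1) =
        Finset.univ.filter fun i : Fin n => (s i = v ∨ t i = v) ∧ i.val < b := by
      ext i
      have : i.val = b → ¬(s i = v ∨ t i = v) := fun h => by rwa [show i = i₀ from Fin.ext h]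
      simp only [Finset.mem_filter, Finset.mem_univ, true_and]
      omega
    rw [hfix, xiAux, hset, ← xiAux]

theorem xiAux_eq_prod_take {b : ℕ} (hb : b ≤ n) :
    xiAux s t b = ⇑((List.ofFn fun i => swap (s i) (t i)).take b).prod := by
  induction b with
  | zero => funext v; simp [xiAux_zero]
  | succ b ih =>
    funext v
    rw [xiAux_succ s t hb, ih (by omega), List.take_add_one, List.getElem?_ofFn,
      dif_pos (show b < n from hb)]
    simp

theorem xiDown_eq_prod : xiDown s t = ⇑(List.ofFn fun i => swap (s i) (t i)).prod := by
  rw [show xiDown s t = xiAux s t n from rfl, xiAux_eq_prod_take s t le_rfl,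
    List.take_of_length_le (by simp)]

end MinimallyDecreasingWalk

theorem quiverConnected_of_forall_succ {m n : ℕ} {s t : Fin n → Fin m}
    (h : ∀ k (hk : k + 1 < m), ∃ i, s i = ⟨k, by omega⟩ ∧ t i = ⟨k + 1, hk⟩) :
    QuiverConnected s t := by
  set R := fun a b : Fin m => ∃ i, (s i = a ∧ t i = b) ∨ (s i = b ∧ t i = a)
  have : Std.Symm R := ⟨fun _ _ ⟨i, hi⟩ => ⟨i, hi.symm⟩⟩
  have hzero : ∀ k (hk : k < m), Relation.ReflTransGen R ⟨0, by omega⟩ ⟨k, hk⟩ := by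
    intro k
    induction k with
    | zero => exact fun _ => .refl
    | succ k ih =>
      intro hk
      obtain ⟨i, hs, ht⟩ := h k hk
      exact (ih (by omega)).tail ⟨i, .inl ⟨hs, ht⟩⟩
  intro v w
  exact (Std.Symm.symm _ _ (hzero v v.isLt)).trans (hzero w w.isLt)

section StepQuiver

variable {m : ℕ} [NeZero m]

-- The numbers in `E` are read modulo `m`; all lists below only use numbers `< m`.
def swapsProd (E : List (ℕ × ℕ)) : Perm (Fin m) :=
  (E.map fun e => swap (e.1 : Fin m) e.2).prod

theorem swapsProd_append (E F : List (ℕ × ℕ)) :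
    (swapsProd (E ++ F) : Perm (Fin m)) = swapsProd E * swapsProd F := by
  simp only [swapsProd, List.map_append, List.prod_append]

theorem swapsProd_flatMap_pair (D : List (ℕ × ℕ)) :
    (swapsProd (D.flatMap fun e => [e, e]) : Perm (Fin m)) = 1 := by
  induction D with
  | nil => rfl
  | cons e D ih =>
    rw [List.flatMap_cons, swapsProd_append, ih, mul_one]
    exact swap_mul_self _ _

theorem exists_quiver_of_steps (E : List (ℕ × ℕ)) (hE : ∀ e ∈ E, e.2 = e.1 + 1 ∧ e.2 < m)
    (hsteps : ∀ k, k + 1 < m → (k, k + 1) ∈ E) :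
    ∃ s t : Fin E.length → Fin m,
      (∀ i, s i ≠ t i) ∧ QuiverConnected s t ∧ xiDown s t = swapsProd E := by
  refine ⟨fun i => ((E.get i).1 : Fin m), fun i => ((E.get i).2 : Fin m), fun i hi => ?_,
    quiverConnected_of_forall_succ fun k hk => ?_, ?_⟩
  · obtain ⟨hsucc, hlt⟩ := hE _ (List.get_mem E i)
    have := congrArg Fin.val hi
    rw [Fin.val_cast_of_lt (by omega), Fin.val_cast_of_lt hlt] at this
    omega
  · obtain ⟨i, hi⟩ := List.mem_iff_get.mp (hsteps k hk)
    refine ⟨i, Fin.ext ?_, Fin.ext ?_⟩ <;>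
      simp only [hi, Fin.val_cast_of_lt hk, Fin.val_cast_of_lt (Nat.lt_of_succ_lt hk)]
  · rw [xiDown_eq_prod, swapsProd]
    conv_rhs => rw [← List.ofFn_get E, List.map_ofFn]
    rfl

end StepQuiver

section Blocks

variable {m : ℕ} [NeZero m]

theorem mem_map_natCast_range' {a p : ℕ} (h : a + p ≤ m) {x : Fin m} :
    x ∈ (List.range' a p).map (↑) ↔ a ≤ x.val ∧ x.val < a + p := by
  constructor
  · intro hx
    obtain ⟨k, hk, rfl⟩ := List.mem_map.mp hx
    rw [List.mem_range'_1] at hk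
    rwa [Fin.val_cast_of_lt (by omega)]
  · exact fun hx => List.mem_map.mpr ⟨x.val, List.mem_range'_1.mpr hx, Fin.cast_val_eq_self x⟩

theorem nodup_map_natCast_range' {a p : ℕ} (h : a + p ≤ m) :
    ((List.range' a p).map ((↑) : ℕ → Fin m)).Nodup :=
  (List.nodup_range' (s := a) (n := p)).map_on fun x hx y hy hxy => by
    rw [List.mem_range'_1] at hx hy
    simpa [Fin.val_cast_of_lt (show x < m by omega), Fin.val_cast_of_lt (show y < m by omega)]
      using congrArg Fin.val hxy

def pathSteps (a p : ℕ) : List (ℕ × ℕ) :=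
  (List.range' a (p - 1)).map fun k => (k, k + 1)

theorem swapsProd_pathSteps (a p : ℕ) :
    (swapsProd (pathSteps a p) : Perm (Fin m)) = ((List.range' a p).map (↑)).formPerm := by
  induction p generalizing a with
  | zero => rfl
  | succ p ih =>
    match p with
    | 0 => simp [pathSteps, swapsProd]
    | p + 1 =>
      rw [List.range'_succ, List.range'_succ, List.map_cons, List.map_cons,
        List.formPerm_cons_cons, ← List.map_cons, ← List.range'_succ, ← ih]
      rfl

def blockSteps : ℕ → List ℕ → List (ℕ × ℕ)
  | _, [] => []
  | a, p :: L => pathSteps a p ++ blockSteps (a + p) L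

def boundarySteps : ℕ → List ℕ → List (ℕ × ℕ)
  | _, [] | _, [_] => []
  | a, p :: q :: L => (a + p - 1, a + p) :: boundarySteps (a + p) (q :: L)

theorem swapsProd_blockSteps_apply_of_lt {a : ℕ} {L : List ℕ} (h : a + L.sum ≤ m) {x : Fin m}
    (hx : x.val < a) : swapsProd (blockSteps a L) x = x := by
  induction L generalizing a with
  | nil => rfl
  | cons p L ih =>
    rw [List.sum_cons] at h
    rw [blockSteps, swapsProd_append, Perm.mul_apply, ih (by omega) (by omega),
      swapsProd_pathSteps, List.formPerm_apply_of_notMem]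
    rw [mem_map_natCast_range' (by omega)]
    omega

theorem cycleType_swapsProd_blockSteps {a : ℕ} {L : List ℕ} (h : a + L.sum ≤ m) :
    (swapsProd (blockSteps a L) : Perm (Fin m)).cycleType = ↑(L.filter (2 ≤ ·)) := by
  induction L generalizing a with
  | nil => simp [blockSteps, swapsProd]
  | cons p L ih =>
    rw [List.sum_cons] at h
    have hdisj : (swapsProd (pathSteps a p) : Perm (Fin m)).Disjoint
        (swapsProd (blockSteps (a + p) L)) := by
      intro x
      by_cases hx : x.val < a + p
      · exact .inr (swapsProd_blockSteps_apply_of_lt (by omega) hx)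
      · refine .inl ?_
        rw [swapsProd_pathSteps, List.formPerm_apply_of_notMem]
        rw [mem_map_natCast_range' (by omega)]
        omega
    rw [blockSteps, swapsProd_append, hdisj.cycleType_mul, ih (by omega), swapsProd_pathSteps,
      List.cycleType_formPerm_of_nodup (nodup_map_natCast_range' (by omega)), List.length_map,
      List.length_range', List.filter_cons]
    by_cases hp : 2 ≤ p <;> simp [hp]

theorem mem_blockSteps {a : ℕ} {L : List ℕ} {e : ℕ × ℕ} (he : e ∈ blockSteps a L) :
    a ≤ e.1 ∧ e.2 = e.1 + 1 ∧ e.2 < a + L.sum := by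
  induction L generalizing a with
  | nil => simp [blockSteps] at he
  | cons p L ih =>
    rw [blockSteps, List.mem_append] at he
    rcases he with he | he
    · obtain ⟨k, hk, rfl⟩ := List.mem_map.mp he
      rw [List.mem_range'_1] at hk
      simp only [List.sum_cons, true_and]
      omega
    · have := ih he
      simp only [List.sum_cons]
      omega

theorem mem_boundarySteps {a : ℕ} {L : List ℕ} (hL : ∀ p ∈ L, 0 < p) {e : ℕ × ℕ}
    (he : e ∈ boundarySteps a L) : a ≤ e.1 ∧ e.2 = e.1 + 1 ∧ e.2 < a + L.sum := by
  induction L generalizing a with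
  | nil => simp [boundarySteps] at he
  | cons p L ih =>
    match L, he with
    | q :: L, he =>
      have hp := hL p (by simp)
      have hq := hL q (by simp)
      simp only [List.sum_cons] at ih ⊢
      rw [boundarySteps, List.mem_cons] at he
      rcases he with rfl | he
      · dsimp only
        omega
      · have := ih (fun r hr => hL r (List.mem_cons_of_mem p hr)) he
        omega

theorem length_blockSteps {a : ℕ} {L : List ℕ} (hL : ∀ p ∈ L, 0 < p) :
    (blockSteps a L).length + L.length = L.sum := by
  induction L generalizing a with
  | nil => rfl
  | cons p L ih =>
    have hp := hL p (by simp)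
    have := ih (a := a + p) fun r hr => hL r (List.mem_cons_of_mem p hr)
    simp only [blockSteps, pathSteps, List.length_append, List.length_map, List.length_range',
      List.length_cons, List.sum_cons]
    omega

theorem length_boundarySteps (a : ℕ) (L : List ℕ) :
    (boundarySteps a L).length = L.length - 1 := by
  induction L generalizing a with
  | nil => rfl
  | cons p L ih =>
    match L with
    | [] => rfl
    | q :: L => simp [boundarySteps, ih]

theorem succ_mem_blockSteps_or_boundarySteps {a k : ℕ} {L : List ℕ} (hak : a ≤ k)
    (hk : k + 1 < a + L.sum) :
    (k, k + 1) ∈ blockSteps a L ∨ (k, k + 1) ∈ boundarySteps a L := by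
  induction L generalizing a with
  | nil => simp at hk; omega
  | cons p L ih =>
    rw [List.sum_cons] at hk
    by_cases hkp : k + 1 < a + p
    · refine .inl (List.mem_append_left _ (List.mem_map.mpr ⟨k, ?_, rfl⟩))
      rw [List.mem_range'_1]
      omega
    match L with
    | [] => simp at hk; omega
    | q :: L =>
      rw [blockSteps, boundarySteps, List.mem_append, List.mem_cons]
      by_cases hkp' : k + 1 = a + p
      · exact .inr (.inl (by ext <;> dsimp only <;> omega))
      · rcases ih (a := a + p) (by omega) (by omega) with h | h
        · exact .inl (.inr h)
        · exact .inr (.inr h)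

/-- The paths through the consecutive blocks of sizes `L`, followed by parallel pairs: one on each
step between two blocks, to connect them, and `d` more on `(0, 1)`, to pad the number of arrows. -/
def paddedBlockSteps (L : List ℕ) (d : ℕ) : List (ℕ × ℕ) :=
  blockSteps 0 L ++ (boundarySteps 0 L ++ List.replicate d (0, 1)).flatMap fun e => [e, e]

theorem length_paddedBlockSteps {L : List ℕ} (hL : ∀ p ∈ L, 0 < p) (hne : L ≠ []) (d : ℕ) :
    (paddedBlockSteps L d).length + 2 = L.sum + L.length + 2 * d := by
  have := length_blockSteps (a := 0) hL
  have := List.length_pos_iff.mpr hne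
  simp [paddedBlockSteps, length_boundarySteps]
  omega

theorem mem_paddedBlockSteps {L : List ℕ} (hL : ∀ p ∈ L, 0 < p) (h : 2 ≤ L.sum) {d : ℕ}
    {e : ℕ × ℕ} (he : e ∈ paddedBlockSteps L d) : e.2 = e.1 + 1 ∧ e.2 < L.sum := by
  simp only [paddedBlockSteps, List.mem_append, List.mem_flatMap, List.mem_replicate,
    List.mem_cons, List.not_mem_nil, or_false] at he
  rcases he with he | ⟨e', he' | ⟨-, rfl⟩, rfl | rfl⟩
  · have := mem_blockSteps he; omega
  · have := mem_boundarySteps hL he'; omega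
  · have := mem_boundarySteps hL he'; omega
  · exact ⟨rfl, h⟩
  · exact ⟨rfl, h⟩

theorem succ_mem_paddedBlockSteps {L : List ℕ} (d : ℕ) {k : ℕ} (hk : k + 1 < L.sum) :
    (k, k + 1) ∈ paddedBlockSteps L d := by
  rcases succ_mem_blockSteps_or_boundarySteps (L := L) (Nat.zero_le k) (by omega) with h | h
  · exact List.mem_append_left _ h
  · exact List.mem_append_right _ (List.mem_flatMap.mpr ⟨_, List.mem_append_left _ h, by simp⟩)

theorem swapsProd_paddedBlockSteps (L : List ℕ) (d : ℕ) :
    (swapsProd (paddedBlockSteps L d) : Perm (Fin m)) = swapsProd (blockSteps 0 L) := by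
  rw [paddedBlockSteps, swapsProd_append, swapsProd_flatMap_pair, mul_one]

end Blocks

/-- for every partition `π` of `m ≥ 2` with `ℓ` parts, and every `c ≥ 0`
with `ℓ - 1 ≤ c` and `c ≡ ℓ - 1 (mod 2)`, there is a connected loop-less quiver with `m`
vertices and `n = m + c - 1` arrows whose permutation `ξ⁻` has cycle type `π`. -/
theorem exists_quiver_with_cycleType (m : ℕ) (hm : 2 ≤ m) (π : Nat.Partition m)
    (c : ℕ) (hle : π.parts.card - 1 ≤ c) (hpar : c ≡ π.parts.card - 1 [MOD 2]) :
    ∃ s t : Fin (m + c - 1) → Fin m,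
      (∀ i, s i ≠ t i) ∧ QuiverConnected s t ∧
      ∃ σ : Equiv.Perm (Fin m),
        (∀ v : Fin m, σ v = xiDown s t v) ∧ σ.partition.parts = π.parts := by
  have : NeZero m := ⟨by omega⟩
  set L := π.parts.toList
  have hpos : ∀ p ∈ L, 0 < p := fun p hp => π.parts_pos (Multiset.mem_toList.mp hp)
  have hsum : L.sum = m := by rw [← Multiset.sum_coe, Multiset.coe_toList, π.parts_sum]
  have hne : L ≠ [] := fun h => by simp [h] at hsum; omega
  have hℓ : L.length = π.parts.card := Multiset.length_toList _
  obtain ⟨d, hd⟩ : ∃ d, c = π.parts.card - 1 + 2 * d :=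
    ⟨(c - (π.parts.card - 1)) / 2, by unfold Nat.ModEq at hpar; omega⟩
  have hlen : (paddedBlockSteps L d).length = m + c - 1 := by
    have := length_paddedBlockSteps hpos hne d
    have := List.length_pos_iff.mpr hne
    omega
  obtain ⟨s, t, hloop, hconn, hxi⟩ := exists_quiver_of_steps (paddedBlockSteps L d)
    (fun e he => hsum ▸ mem_paddedBlockSteps hpos (hsum ▸ hm) he)
    (fun k hk => succ_mem_paddedBlockSteps d (hsum ▸ hk))
  rw [← hlen]
  refine ⟨s, t, hloop, hconn, swapsProd (blockSteps 0 L), fun v => ?_,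
    Perm.partition_parts_eq_of_cycleType_eq (Fintype.card_fin m) ?_⟩
  · rw [hxi, swapsProd_paddedBlockSteps]
  · rw [cycleType_swapsProd_blockSteps (by omega), ← Multiset.filter_coe, Multiset.coe_toList]
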